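/- arXiv:2508.20382 — 4 statements merged into one kernel-verified Lean document; each statement's English description precedes it below -/
import Mathlib

section
/- For any positive semidefinite Hermitian n×n complex matrix A and any irreducible character χ^λ of the symmetric group S_n indexed by a partition λ of n, the λ-immanant of A satisfies Imm_{χ^λ}(A) ≥ χ^λ(1) · det(A). -/
/-!
Schur's argument. For positive definite `A`, the LDL decomposition gives `A = Bᴴ * B` with `B`
upper triangular. Expanding the entries of `Bᴴ * B` turns `∏ i, A (σ i) i` into
`∑ f, star (β f) * β (f ∘ σ)`, summed over all maps `f : Fin n → Fin n`, where
`β f = ∏ i, B (f i) i`. Averaging over the orbits of right composition with permutations gives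
`n! * Imm_χ A = ∑ f, Q f` with `Q f = ∑ ρ, ∑ τ, χ (ρ⁻¹ * τ) * (star (β (f ∘ ρ)) * β (f ∘ τ))`,
and every `Q f` is nonnegative because a character is a positive definite function on the
group: averaging a Hermitian form makes the representation unitary. Triangularity makes `β`
vanish at every permutation other than the identity, so on the orbit of bijections
`Q f = χ 1 * |det B|² = χ 1 * det A`; dropping all other orbits gives the inequality.
The positive semidefinite case follows by continuity from `A + ε • 1`.
-/

open scoped ComplexOrder

noncomputable def immanant {m : ℕ} (χ : Equiv.Perm (Fin m) → ℂ)
    (B : Matrix (Fin m) (Fin m) ℂ) : ℂ :=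
  ∑ σ : Equiv.Perm (Fin m), χ σ * ∏ i, B (σ i) i

theorem Equiv.Perm.eq_one_of_forall_apply_le {α : Type*} [LinearOrder α] [WellFoundedLT α]
    {σ : Equiv.Perm α} (h : ∀ i, σ i ≤ i) : σ = 1 := by
  by_contra hσ
  obtain ⟨i, hi, hmin⟩ := wellFounded_lt.has_min {i | σ i ≠ i}
    (by simpa [Set.Nonempty, Equiv.ext_iff] using hσ)
  have hfix : σ (σ i) = σ i := not_not.1 fun hne => hmin (σ i) hne ((h i).lt_of_ne hi)
  exact hi (σ.injective hfix)

theorem Equiv.Perm.sum_sum_sum_inv_mul_comp_eq_card_mul {α β R : Type*} [Fintype α]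
    [DecidableEq α] [Fintype β] [DecidableEq β] [CommSemiring R]
    (χ : Equiv.Perm α → R) (a b : (α → β) → R) :
    ∑ f : α → β, ∑ ρ : Equiv.Perm α, ∑ τ, χ (ρ⁻¹ * τ) * (a (f ∘ ρ) * b (f ∘ τ)) =
      Fintype.card (Equiv.Perm α) * ∑ σ, χ σ * ∑ f, a f * b (f ∘ σ) := by
  have hρ : ∀ ρ : Equiv.Perm α, ∑ f : α → β, ∑ τ, χ (ρ⁻¹ * τ) * (a (f ∘ ρ) * b (f ∘ τ)) =
      ∑ σ, χ σ * ∑ f, a f * b (f ∘ σ) := fun ρ => by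
    calc _ = ∑ f : α → β, ∑ σ, χ σ * (a (f ∘ ρ) * b (f ∘ ρ ∘ σ)) :=
          Fintype.sum_congr _ _ fun f => by
            rw [← Equiv.sum_comp (Equiv.mulLeft ρ)]
            simp [Equiv.Perm.coe_mul]
      _ = ∑ f : α → β, ∑ σ, χ σ * (a f * b (f ∘ σ)) :=
          Equiv.sum_comp (Equiv.arrowCongr ρ.symm (Equiv.refl β))
            fun g => ∑ σ, χ σ * (a g * b (g ∘ σ))
      _ = _ := by simp only [Finset.mul_sum]; exact Finset.sum_comm
  rw [Finset.sum_comm, Fintype.sum_congr _ _ hρ, Finset.sum_const, Finset.card_univ, nsmul_eq_mul]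

namespace Matrix

section Unitarize

open scoped MatrixOrder

variable {G : Type*} [Group G] [Fintype G] {𝕜 : Type*} [RCLike 𝕜]
  {d : Type*} [Fintype d] [DecidableEq d]

theorem exists_posDef_conjTranspose_mul_mul_eq (M : G →* Matrix d d 𝕜) :
    ∃ P : Matrix d d 𝕜, P.PosDef ∧ ∀ g, (M g)ᴴ * P * M g = P := by
  classical
  refine ⟨∑ g, (M g)ᴴ * M g, ?_, fun g => ?_⟩
  · rw [← Finset.add_sum_erase _ _ (Finset.mem_univ 1), map_one, conjTranspose_one, mul_one]
    exact PosDef.one.add_posSemidef <|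
      posSemidef_sum _ fun g _ => posSemidef_conjTranspose_mul_self _
  · rw [Matrix.mul_sum, Matrix.sum_mul]
    refine Fintype.sum_equiv (Equiv.mulRight g) _ _ fun h => ?_
    simp only [Equiv.coe_mulRight, map_mul, conjTranspose_mul, Matrix.mul_assoc]

theorem exists_isUnit_conj_mem_unitaryGroup (M : G →* Matrix d d 𝕜) :
    ∃ C : Matrix d d 𝕜, IsUnit C ∧ ∀ g, C * M g * C⁻¹ ∈ unitaryGroup d 𝕜 := by
  obtain ⟨P, hP, hPM⟩ := exists_posDef_conjTranspose_mul_mul_eq M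
  have hC : IsUnit (CFC.sqrt P) := (CFC.isUnit_sqrt_iff P hP.posSemidef.nonneg).2 hP.isUnit
  have hCH : (CFC.sqrt P)ᴴ = CFC.sqrt P := (nonneg_iff_posSemidef.1 (CFC.sqrt_nonneg P)).isHermitian
  have hCC : CFC.sqrt P * CFC.sqrt P = P := CFC.sqrt_mul_sqrt_self P hP.posSemidef.nonneg
  refine ⟨CFC.sqrt P, hC, fun g => mem_unitaryGroup_iff'.2 ?_⟩
  set C := CFC.sqrt P
  have hdet := (isUnit_iff_isUnit_det C).1 hC
  calc star (C * M g * C⁻¹) * (C * M g * C⁻¹) = C⁻¹ * ((M g)ᴴ * (C * C) * M g) * C⁻¹ := by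
        simp only [star_eq_conjTranspose, conjTranspose_mul, conjTranspose_nonsing_inv, hCH,
          Matrix.mul_assoc]
    _ = 1 := by
        rw [hCC, hPM, ← hCC, nonsing_inv_mul_cancel_left _ _ hdet, mul_nonsing_inv _ hdet]

theorem exists_unitary_monoidHom_trace_eq (M : G →* Matrix d d 𝕜) :
    ∃ U : G →* unitaryGroup d 𝕜, ∀ g, trace (U g : Matrix d d 𝕜) = trace (M g) := by
  obtain ⟨C, hC, hCM⟩ := exists_isUnit_conj_mem_unitaryGroup M
  have hdet := (isUnit_iff_isUnit_det C).1 hC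
  refine ⟨MonoidHom.mk' (fun g => ⟨C * M g * C⁻¹, hCM g⟩) fun g h => Subtype.ext ?_, fun g => ?_⟩
  · simp only [map_mul, Submonoid.coe_mul, Matrix.mul_assoc, nonsing_inv_mul_cancel_left _ _ hdet]
  · simp only [MonoidHom.mk'_apply, trace_mul_cycle, nonsing_inv_mul _ hdet, Matrix.one_mul]

end Unitarize

theorem PosDef.exists_isUpperTriangular_eq_conjTranspose_mul {𝕜 : Type*} [RCLike 𝕜]
    {n : Type*} [Fintype n] [LinearOrder n] [WellFoundedLT n] [LocallyFiniteOrderBot n]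
    {A : Matrix n n 𝕜} (hA : A.PosDef) :
    ∃ B : Matrix n n 𝕜, B.IsUpperTriangular ∧ A = Bᴴ * B := by
  classical
  have hD : (LDL.diag hA).PosSemidef := by
    rw [LDL.diag_eq_lowerInv_conj]
    exact hA.posSemidef.mul_mul_conjTranspose_same _
  have hsqrt : ∀ i, ∃ e : 𝕜, star e * e = LDL.diagEntries hA i := fun i => by
    obtain ⟨x, hx, hxd⟩ := RCLike.nonneg_iff_exists_ofReal.1 (posSemidef_diagonal_iff.1 hD i)
    exact ⟨√x, by rw [RCLike.star_def, RCLike.conj_ofReal, ← RCLike.ofReal_mul,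
      Real.mul_self_sqrt hx, hxd]⟩
  choose e he using hsqrt
  have : Invertible (LDL.lowerInv hA) := LDL.invertibleLowerInv hA
  have hL : (LDL.lower hA).IsLowerTriangular :=
    blockTriangular_inv_of_blockTriangular fun i j hij => LDL.lowerInv_triangular hA hij
  refine ⟨diagonal e * (LDL.lower hA)ᴴ, (blockTriangular_diagonal e).mul ?_, ?_⟩
  · intro i j hij
    rw [conjTranspose_apply, hL hij, star_zero]
  · have hdiag : (diagonal e)ᴴ * diagonal e = LDL.diag hA := by
      rw [diagonal_conjTranspose, diagonal_mul_diagonal, LDL.diag]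
      exact congrArg diagonal (funext he)
    rw [conjTranspose_mul, conjTranspose_conjTranspose, Matrix.mul_assoc,
      ← Matrix.mul_assoc _ (diagonal e), hdiag, ← Matrix.mul_assoc, LDL.lower_conj_diag]

section EntryProd

variable {n R : Type*} [Fintype n]

def entryProd [CommMonoid R] (B : Matrix n n R) (f : n → n) : R :=
  ∏ i, B (f i) i

theorem IsUpperTriangular.entryProd_perm_eq_zero [LinearOrder n] [CommMonoidWithZero R]
    {B : Matrix n n R} (hB : B.IsUpperTriangular) {σ : Equiv.Perm n} (hσ : σ ≠ 1) :
    B.entryProd σ = 0 := by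
  by_contra h
  refine hσ (Equiv.Perm.eq_one_of_forall_apply_le fun i => not_lt.1 fun hi => h ?_)
  exact Finset.prod_eq_zero (Finset.mem_univ i) (hB hi)

theorem prod_conjTranspose_mul_self_apply_perm [DecidableEq n] [CommRing R] [StarRing R]
    (B : Matrix n n R) (σ : Equiv.Perm n) :
    ∏ i, (Bᴴ * B) (σ i) i = ∑ f : n → n, star (B.entryProd f) * B.entryProd (f ∘ σ) := by
  simp only [mul_apply, conjTranspose_apply, Fintype.prod_sum, Finset.prod_mul_distrib,
    ← star_prod]
  refine (Equiv.sum_comp (Equiv.arrowCongr σ.symm (Equiv.refl n)) _).symm.trans ?_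
  refine Fintype.sum_congr _ _ fun f => ?_
  simp only [entryProd, Equiv.arrowCongr_apply, Equiv.symm_symm, Equiv.coe_refl, id_eq,
    Function.comp_apply]
  rw [Equiv.prod_comp σ fun j => B (f j) j]

theorem IsUpperTriangular.sum_sum_inv_mul_entryProd_comp [DecidableEq n] [LinearOrder n]
    [CommRing R] [StarRing R] {B : Matrix n n R} (hB : B.IsUpperTriangular)
    (χ : Equiv.Perm n → R) (g : Equiv.Perm n) :
    ∑ ρ, ∑ τ, χ (ρ⁻¹ * τ) * (star (B.entryProd (g ∘ ρ)) * B.entryProd (g ∘ τ)) =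
      χ 1 * (Bᴴ * B).det := by
  have hvanish : ∀ ρ, ρ ≠ g⁻¹ → B.entryProd ⇑(g * ρ) = 0 := fun ρ hρ =>
    hB.entryProd_perm_eq_zero fun h => hρ (eq_inv_of_mul_eq_one_right h)
  simp only [← Equiv.Perm.coe_mul]
  rw [Finset.sum_eq_single g⁻¹ (fun ρ _ hρ => by
      simp only [hvanish ρ hρ, star_zero, zero_mul, mul_zero, Finset.sum_const_zero]) (by simp),
    Finset.sum_eq_single g⁻¹ (fun τ _ hτ => by simp only [hvanish τ hτ, mul_zero]) (by simp)]
  simp [entryProd, det_mul, det_conjTranspose, det_of_isUpperTriangular hB]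

end EntryProd

end Matrix

open Matrix

theorem FDRep.exists_unitary_monoidHom_trace_eq_character {G : Type*} [Group G] [Fintype G]
    (V : FDRep ℂ G) :
    ∃ (d : ℕ) (U : G →* unitaryGroup (Fin d) ℂ),
      ∀ g, trace (U g : Matrix (Fin d) (Fin d) ℂ) = V.character g := by
  let b := Module.finBasis ℂ V
  obtain ⟨U, hU⟩ :=
    exists_unitary_monoidHom_trace_eq ((LinearMap.toMatrixAlgEquiv b).toMonoidHom.comp V.ρ)
  exact ⟨_, U, fun g => by rw [hU, FDRep.character, LinearMap.trace_eq_matrix_trace ℂ b]; rfl⟩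

theorem FDRep.sum_sum_character_inv_mul_mul_nonneg {G : Type*} [Group G] [Fintype G]
    (V : FDRep ℂ G) (c : G → ℂ) :
    0 ≤ ∑ ρ, ∑ τ, V.character (ρ⁻¹ * τ) * (star (c ρ) * c τ) := by
  obtain ⟨d, U, hU⟩ := V.exists_unitary_monoidHom_trace_eq_character
  set X : Matrix (Fin d) (Fin d) ℂ := ∑ τ, c τ • (U τ : Matrix (Fin d) (Fin d) ℂ)
  have hX : ∑ ρ, ∑ τ, V.character (ρ⁻¹ * τ) * (star (c ρ) * c τ) = trace (Xᴴ * X) := by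
    simp only [X, conjTranspose_sum, conjTranspose_smul, Finset.sum_mul_sum, trace_sum,
      smul_mul_smul_comm, trace_smul, ← hU, map_mul, map_inv, Submonoid.coe_mul,
      ← Unitary.star_eq_inv, Unitary.coe_star, star_eq_conjTranspose, smul_eq_mul, mul_comm]
  exact hX ▸ (posSemidef_conjTranspose_mul_self X).trace_nonneg

theorem continuous_immanant {m : ℕ} (χ : Equiv.Perm (Fin m) → ℂ) : Continuous (immanant χ) := by
  unfold immanant
  fun_prop

theorem character_one_mul_det_le_immanant_of_posDef {n : ℕ} {A : Matrix (Fin n) (Fin n) ℂ}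
    (hA : A.PosDef) (V : FDRep ℂ (Equiv.Perm (Fin n))) :
    V.character 1 * A.det ≤ immanant V.character A := by
  obtain ⟨B, hB, rfl⟩ := hA.exists_isUpperTriangular_eq_conjTranspose_mul
  set χ := V.character
  let Q : (Fin n → Fin n) → ℂ := fun f =>
    ∑ ρ, ∑ τ, χ (ρ⁻¹ * τ) * (star (B.entryProd (f ∘ ρ)) * B.entryProd (f ∘ τ))
  have hQ : ∑ f, Q f = Fintype.card (Equiv.Perm (Fin n)) * immanant χ (Bᴴ * B) := by
    simp only [immanant, prod_conjTranspose_mul_self_apply_perm]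
    exact Equiv.Perm.sum_sum_sum_inv_mul_comp_eq_card_mul χ (star ∘ B.entryProd) B.entryProd
  have hN : (0 : ℂ) < Fintype.card (Equiv.Perm (Fin n)) := Nat.cast_pos.2 Fintype.card_pos
  refine le_of_mul_le_mul_left ?_ hN
  calc _ = ∑ g : Equiv.Perm (Fin n), Q g := by
        simp only [Q, hB.sum_sum_inv_mul_entryProd_comp, Finset.sum_const, Finset.card_univ,
          nsmul_eq_mul]
    _ = ∑ f ∈ Finset.univ.map
        (⟨(⇑), DFunLike.coe_injective⟩ : Equiv.Perm (Fin n) ↪ (Fin n → Fin n)), Q f := by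
        rw [Finset.sum_map]; rfl
    _ ≤ ∑ f, Q f :=
        Finset.sum_le_univ_sum_of_nonneg fun f => V.sum_sum_character_inv_mul_mul_nonneg _
    _ = _ := hQ

theorem schur_immanant_inequality_general (n : ℕ) (A : Matrix (Fin n) (Fin n) ℂ)
    (hA : A.PosSemidef) (V : FDRep ℂ (Equiv.Perm (Fin n))) :
    FDRep.character V 1 * A.det ≤ immanant (FDRep.character V) A := by
  have hlim : Filter.Tendsto (fun ε : ℝ => A + ε • (1 : Matrix (Fin n) (Fin n) ℂ))
      (nhdsWithin 0 (Set.Ioi 0)) (nhds A) :=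
    ((Continuous.tendsto' (by fun_prop) 0 A (by simp)).mono_left nhdsWithin_le_nhds)
  refine le_of_tendsto_of_tendsto
    ((continuous_const.mul continuous_id.matrix_det).continuousAt.tendsto.comp hlim)
    ((continuous_immanant _).continuousAt.tendsto.comp hlim)
    (eventually_nhdsWithin_of_forall fun ε hε => ?_)
  exact character_one_mul_det_le_immanant_of_posDef
    (PosDef.posSemidef_add hA (PosDef.one.smul hε)) V

/-- Schur's inequality: for a positive semidefinite Hermitian matrix `A` and any irreducible
character `χ^λ` of the symmetric group `S_n` (every irreducible character of `S_n` is the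
character χ^λ of an irreducible representation indexed by a partition λ of n),
`χ^λ(1) ⬝ det A ≤ Imm_{χ^λ}(A)`. -/
theorem schur_immanant_inequality (n : ℕ) (A : Matrix (Fin n) (Fin n) ℂ)
    (hA : A.PosSemidef) (V : FDRep ℂ (Equiv.Perm (Fin n)))
    (hV : CategoryTheory.Simple V) :
    FDRep.character V 1 * A.det ≤ immanant (FDRep.character V) A :=
  schur_immanant_inequality_general n A hA V
end

section
/- For any positive semidefinite Hermitian n×n complex matrix A, the immanant Imm_{χ^λ}(A) is a nonnegative real number for every partition λ of n. -/
open scoped ComplexOrder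

/-! Schur's argument. For a representation `R` of a finite group, averaging `star (R g) * R g`
over the group gives an invariant positive definite form `star b * b`, so conjugating by `b`
makes `R` unitary; then `χ (σ * τ⁻¹) = trace (U σ * star (U τ))` is a Gram matrix, hence
positive semidefinite. So is `(∏ i, A (σ i) (τ i))_{σ, τ}`, a Hadamard product of submatrices
of `A`, and by the Schur product theorem so is the entrywise product of the two matrices,
whose entries sum to `n! * Imm_χ(A)`. -/

open Matrix Finset

namespace Matrix

variable {𝕜 ι : Type*} [RCLike 𝕜]

theorem PosSemidef.sum_entries_nonneg [Fintype ι] {M : Matrix ι ι 𝕜} (hM : M.PosSemidef) :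
    0 ≤ ∑ i, ∑ j, M i j := by
  simpa [dotProduct, mulVec] using hM.dotProduct_mulVec_nonneg fun _ ↦ 1

theorem PosSemidef.prod_hadamard [Finite ι] {α : Type*} (s : Finset α) {A : α → Matrix ι ι 𝕜}
    (hA : ∀ a ∈ s, (A a).PosSemidef) : (of fun i j ↦ ∏ a ∈ s, A a i j).PosSemidef := by
  classical
  induction s using Finset.induction_on with
  | empty => simpa [vecMulVec] using posSemidef_vecMulVec_self_star fun _ : ι ↦ (1 : 𝕜)
  | insert a s ha ih =>
    convert (hA a (mem_insert_self a s)).hadamard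
      (ih fun b hb ↦ hA b (mem_insert_of_mem hb)) using 1
    ext i j
    simp [prod_insert ha]

section FiniteGroup

variable [Fintype ι] [DecidableEq ι] {G : Type*} [Group G] [Fintype G]

theorem posDef_sum_star_mul_self (R : G →* Matrix ι ι 𝕜) : (∑ g, star (R g) * R g).PosDef := by
  classical
  rw [← add_sum_erase _ _ (mem_univ 1), map_one, star_one, one_mul]
  exact PosDef.one.add_posSemidef <| posSemidef_sum _ fun g _ ↦ by
    simpa [star_eq_conjTranspose] using posSemidef_conjTranspose_mul_self (R g)

theorem star_mul_sum_star_mul_self_mul (R : G →* Matrix ι ι 𝕜) (g : G) :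
    star (R g) * (∑ h, star (R h) * R h) * R g = ∑ h, star (R h) * R h := by
  simp only [mul_sum, sum_mul]
  refine Fintype.sum_equiv (Equiv.mulRight g) _ _ fun h ↦ ?_
  simp only [Equiv.coe_mulRight, map_mul, star_mul, mul_assoc]

open scoped MatrixOrder in
theorem exists_units_conj_mem_unitary (R : G →* Matrix ι ι 𝕜) :
    ∃ u : (Matrix ι ι 𝕜)ˣ, ∀ g,
      (u : Matrix ι ι 𝕜) * R g * (↑u⁻¹ : Matrix ι ι 𝕜) ∈ unitary (Matrix ι ι 𝕜) := by
  obtain ⟨b, hb, hH⟩ := CStarAlgebra.isStrictlyPositive_iff_eq_star_mul_self.mp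
    (posDef_sum_star_mul_self R).isStrictlyPositive
  obtain ⟨u, rfl⟩ := hb
  refine ⟨u, fun g ↦ mem_unitaryGroup_iff'.mpr ?_⟩
  calc star ((u : Matrix ι ι 𝕜) * R g * (↑u⁻¹ : Matrix ι ι 𝕜)) * (↑u * R g * ↑u⁻¹)
      = star ↑u⁻¹ * (star (R g) * (star ↑u * ↑u) * R g) * ↑u⁻¹ := by
        simp only [star_mul, mul_assoc]
    _ = star ↑u⁻¹ * star ↑u * (↑u * ↑u⁻¹) := by
        rw [← hH, star_mul_sum_star_mul_self_mul, hH]; simp only [mul_assoc]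
    _ = 1 := by rw [← star_mul, Units.mul_inv, star_one, one_mul]

theorem posSemidef_trace_mul_inv (R : G →* Matrix ι ι 𝕜) :
    (of fun g h ↦ (R (g * h⁻¹)).trace).PosSemidef := by
  obtain ⟨u, hu⟩ := exists_units_conj_mem_unitary R
  let U : G → Matrix ι ι 𝕜 := fun g ↦ (u : Matrix ι ι 𝕜) * R g * (↑u⁻¹ : Matrix ι ι 𝕜)
  have hstar (h : G) : star (U h) = U h⁻¹ := by
    have hinv : U h * U h⁻¹ = 1 := by
      simp only [U, mul_assoc, Units.inv_mul_cancel_left]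
      rw [← mul_assoc (R h), ← map_mul, mul_inv_cancel, map_one, one_mul, Units.mul_inv]
    rw [← mul_one (star (U h)), ← hinv, ← mul_assoc, Unitary.star_mul_self_of_mem (hu h), one_mul]
  have htrace (g h : G) : (R (g * h⁻¹)).trace = (U g * star (U h)).trace := by
    rw [hstar, map_mul, ← trace_units_conj u]
    simp only [U, mul_assoc, Units.inv_mul_cancel_left]
  convert posSemidef_self_mul_conjTranspose (of fun g (p : ι × ι) ↦ U g p.1 p.2) using 1
  ext g h
  rw [of_apply, htrace]
  simp [trace, mul_apply, Fintype.sum_prod_type]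

end FiniteGroup

end Matrix

theorem FDRep.posSemidef_character_mul_inv {𝕜 G : Type*} [RCLike 𝕜] [Group G] [Fintype G]
    (V : FDRep 𝕜 G) : (Matrix.of fun g h ↦ V.character (g * h⁻¹)).PosSemidef := by
  classical
  let b := Module.finBasis 𝕜 V
  convert posSemidef_trace_mul_inv
    ((LinearMap.toMatrixAlgEquiv b).toRingEquiv.toMonoidHom.comp V.ρ) using 1
  ext g h
  exact LinearMap.trace_eq_matrix_trace 𝕜 b _

open Equiv in
theorem card_mul_immanant {m : ℕ} (χ : Perm (Fin m) → ℂ) (B : Matrix (Fin m) (Fin m) ℂ) :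
    Fintype.card (Perm (Fin m)) * immanant χ B =
      ∑ σ, ∑ τ, χ (σ * τ⁻¹) * ∏ i, B (σ i) (τ i) := by
  rw [sum_comm, ← nsmul_eq_mul, ← card_univ, ← sum_const]
  refine sum_congr rfl fun τ _ ↦ Eq.symm ?_
  rw [immanant, ← Equiv.sum_comp (Equiv.mulRight τ)]
  refine sum_congr rfl fun ρ _ ↦ ?_
  simp only [coe_mulRight, mul_inv_cancel_right, Perm.mul_apply]
  rw [Equiv.prod_comp τ fun j ↦ B (ρ j) j]

theorem immanant_nonneg_of_posSemidef_general (n : ℕ) (A : Matrix (Fin n) (Fin n) ℂ)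
    (hA : A.PosSemidef) (V : FDRep ℂ (Equiv.Perm (Fin n))) :
    0 ≤ immanant (FDRep.character V) A := by
  have hprod : (of fun σ τ : Equiv.Perm (Fin n) ↦ ∏ i, A (σ i) (τ i)).PosSemidef :=
    PosSemidef.prod_hadamard univ fun i _ ↦ hA.submatrix fun σ : Equiv.Perm (Fin n) ↦ σ i
  have hsum := (V.posSemidef_character_mul_inv.hadamard hprod).sum_entries_nonneg
  simp only [hadamard_apply, of_apply, ← card_mul_immanant] at hsum
  exact le_of_mul_le_mul_left (by rwa [mul_zero]) (by positivity)

/-- For a positive semidefinite Hermitian matrix `A`, the immanant `Imm_{χ^λ}(A)` with respect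
to any irreducible character of `S_n` is a nonnegative real number (here expressed via the
partial order on `ℂ`: `0 ≤ z` iff `z` is a nonnegative real). -/
theorem immanant_nonneg_of_posSemidef (n : ℕ) (A : Matrix (Fin n) (Fin n) ℂ)
    (hA : A.PosSemidef) (V : FDRep ℂ (Equiv.Perm (Fin n)))
    (hV : CategoryTheory.Simple V) :
    0 ≤ immanant (FDRep.character V) A :=
  immanant_nonneg_of_posSemidef_general n A hA V
end

section
/- For the permanent (λ = (n), the trivial character) and any positive semidefinite Hermitian n×n matrix A, one has per(A) ≥ det(A). -/
open scoped ComplexOrder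

/-- The permanent of a complex square matrix: `per A = ∑_{σ ∈ S_n} ∏_i A_{σ(i), i}`. -/
noncomputable def permanent {n : ℕ} (A : Matrix (Fin n) (Fin n) ℂ) : ℂ :=
  ∑ σ : Equiv.Perm (Fin n), ∏ i, A (σ i) i

open Finset
open scoped Matrix

variable {n : ℕ}

/-- product along a function -/
noncomputable def pg (B : Matrix (Fin n) (Fin n) ℂ) (f : Fin n → Fin n) : ℂ := ∏ i, B (f i) i

noncomputable def pS (B : Matrix (Fin n) (Fin n) ℂ) (f : Fin n → Fin n) : ℂ :=
  ∑ τ : Equiv.Perm (Fin n), pg B (f ∘ τ)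

lemma pS_comp (B : Matrix (Fin n) (Fin n) ℂ) (f : Fin n → Fin n) (τ : Equiv.Perm (Fin n)) :
    pS B (f ∘ τ) = pS B f := by
  unfold pS
  rw [← Equiv.sum_comp (Equiv.mulLeft τ) (fun ρ => pg B (f ∘ ρ))]
  rfl



lemma step1 (B : Matrix (Fin n) (Fin n) ℂ) :
    permanent (Bᴴ * B) = ∑ f : Fin n → Fin n, pg B f * star (pS B f) := by
  unfold permanent
  have h1 : ∀ σ : Equiv.Perm (Fin n), ∏ i, (Bᴴ * B) (σ i) i
      = ∑ f : Fin n → Fin n, star (pg B (f ∘ ⇑σ⁻¹)) * pg B f := by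
    intro σ
    have : ∀ i : Fin n, (Bᴴ * B) (σ i) i = ∑ k, star (B k (σ i)) * B k i := by
      intro i; simp [Matrix.mul_apply, Matrix.conjTranspose_apply]
    simp_rw [this]
    rw [Finset.prod_univ_sum]
    rw [show (Fintype.piFinset fun _ : Fin n => (univ : Finset (Fin n))) = univ from
      Fintype.piFinset_univ]
    apply Finset.sum_congr rfl
    intro f _
    have hp : pg B (f ∘ ⇑σ⁻¹) = ∏ i, B (f i) (σ i) := by
      unfold pg
      rw [← Equiv.prod_comp σ (fun j => B ((f ∘ ⇑σ⁻¹) j) j)]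
      simp [Function.comp]
    rw [Finset.prod_mul_distrib, ← star_prod, hp]
    rfl
  simp_rw [h1]
  rw [Finset.sum_comm]
  apply Finset.sum_congr rfl
  intro f _
  rw [← Finset.sum_mul, mul_comm]
  congr 1
  rw [← star_sum]
  congr 1
  unfold pS
  exact Equiv.sum_comp (Equiv.inv (Equiv.Perm (Fin n))) (fun τ => pg B (f ∘ ⇑τ))

lemma step2 (B : Matrix (Fin n) (Fin n) ℂ) :
    ((Nat.factorial n : ℕ) : ℂ) * permanent (Bᴴ * B) = ∑ f : Fin n → Fin n, pS B f * star (pS B f) := by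
  have hcard : ((Fintype.card (Equiv.Perm (Fin n)) : ℕ) : ℂ) = ((Nat.factorial n : ℕ) : ℂ) := by
    rw [Fintype.card_perm, Fintype.card_fin]
  rw [step1, ← hcard]
  rw [show ((Fintype.card (Equiv.Perm (Fin n)) : ℕ) : ℂ) *
      (∑ f : Fin n → Fin n, pg B f * star (pS B f))
    = ∑ τ : Equiv.Perm (Fin n), ∑ f : Fin n → Fin n, pg B f * star (pS B f) by
    rw [Finset.sum_const, Finset.card_univ, nsmul_eq_mul]]
  have hτ : ∀ τ : Equiv.Perm (Fin n),
      (∑ f : Fin n → Fin n, pg B f * star (pS B f))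
      = ∑ f : Fin n → Fin n, pg B (f ∘ ⇑τ) * star (pS B f) := by
    intro τ
    let E : (Fin n → Fin n) ≃ (Fin n → Fin n) := Equiv.arrowCongr τ.symm (Equiv.refl (Fin n))
    have hE : ∀ f, E f = f ∘ ⇑τ := fun f => rfl
    rw [← Equiv.sum_comp E (fun g => pg B g * star (pS B g))]
    apply Finset.sum_congr rfl
    intro f _
    rw [hE, pS_comp]
  rw [Finset.sum_congr rfl (fun τ _ => hτ τ), Finset.sum_comm]
  apply Finset.sum_congr rfl
  intro f _
  rw [← Finset.sum_mul]
  rfl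

lemma perm_exists_lt {ρ : Equiv.Perm (Fin n)} (h : ρ ≠ 1) : ∃ i, i < ρ i := by
  by_contra h'
  push_neg at h'
  apply h
  have key : ∀ i, ρ i = i := by
    intro i
    induction i using WellFoundedLT.induction with
    | ind i ih =>
      rcases lt_or_eq_of_le (h' i) with hlt | heq
      · exfalso
        have h2 := ih (ρ i) hlt
        exact absurd (ρ.injective h2) (ne_of_lt hlt)
      · exact heq
  ext i
  simp [key i]

lemma permanent_triangular (B : Matrix (Fin n) (Fin n) ℂ)
    (hB : ∀ i j : Fin n, j < i → B i j = 0) :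
    permanent B = ∏ i, B i i := by
  unfold permanent
  rw [Finset.sum_eq_single 1]
  · simp
  · intro ρ _ hρ
    obtain ⟨i, hi⟩ := perm_exists_lt hρ
    exact Finset.prod_eq_zero (Finset.mem_univ i) (hB _ _ hi)
  · intro h; exact absurd (Finset.mem_univ 1) h

lemma pS_perm (B : Matrix (Fin n) (Fin n) ℂ) (ρ : Equiv.Perm (Fin n)) :
    pS B ⇑ρ = permanent B := by
  unfold pS permanent
  rw [← Equiv.sum_comp (Equiv.mulLeft ρ) (fun τ => ∏ i, B (τ i) i)]
  rfl


lemma cholesky_psd {m : Type*} [Fintype m] [LinearOrder m] [WellFoundedLT m]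
    [LocallyFiniteOrderBot m] {S : Matrix m m ℂ} (hS : S.PosDef) :
    ∃ B : Matrix m m ℂ, (∀ i j : m, j < i → B i j = 0) ∧ Bᴴ * B = S := by
  haveI : Invertible (LDL.lowerInv hS) := LDL.invertibleLowerInv hS
  set L := LDL.lower hS with hLdef
  set d := LDL.diagEntries hS with hddef
  have hdecomp : L * Matrix.diagonal d * Lᴴ = S := LDL.lower_conj_diag hS
  have hDpsd : (Matrix.diagonal d).PosSemidef := by
    rw [show Matrix.diagonal d = LDL.diag hS from rfl, LDL.diag_eq_lowerInv_conj hS]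
    exact hS.posSemidef.mul_mul_conjTranspose_same (LDL.lowerInv hS)
  have hd : ∀ i, 0 ≤ d i := Matrix.posSemidef_diagonal_iff.mp hDpsd
  set s : m → ℂ := fun i => ((Real.sqrt (d i).re : ℝ) : ℂ) with hsdef
  have hs : ∀ i, star (s i) * s i = d i := by
    intro i
    have h1 : 0 ≤ (d i).re ∧ (0 : ℂ).im = (d i).im := Complex.le_def.mp (hd i)
    simp only [hsdef]
    rw [RCLike.star_def, Complex.conj_ofReal, ← Complex.ofReal_mul,
      Real.mul_self_sqrt h1.1]
    exact Complex.ext rfl h1.2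
  refine ⟨Matrix.diagonal s * Lᴴ, ?_, ?_⟩
  · -- triangularity
    have hLinvTri : (LDL.lowerInv hS).BlockTriangular OrderDual.toDual := by
      intro i j hij
      exact LDL.lowerInv_triangular hS hij
    have hLTri : L.BlockTriangular OrderDual.toDual := by
      rw [hLdef, LDL.lower]
      exact Matrix.blockTriangular_inv_of_blockTriangular hLinvTri
    intro i j hji
    rw [Matrix.diagonal_mul, Matrix.conjTranspose_apply, hLTri hji, star_zero, mul_zero]
  · rw [Matrix.conjTranspose_mul, Matrix.conjTranspose_conjTranspose,
      Matrix.diagonal_conjTranspose]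
    calc L * (Matrix.diagonal (star s)) * (Matrix.diagonal s * Lᴴ)
        = L * ((Matrix.diagonal (star s)) * Matrix.diagonal s) * Lᴴ := by
          simp only [Matrix.mul_assoc]
      _ = L * Matrix.diagonal d * Lᴴ := by
          rw [Matrix.diagonal_mul_diagonal,
            show (fun i => star s i * s i) = d from funext fun i => hs i]
      _ = S := hdecomp

lemma nat_mul_cancel_le {c : ℕ} (hc : 0 < c) {x y : ℂ} (h : (c : ℂ) * x ≤ (c : ℂ) * y) :
    x ≤ y := by
  have hcR : (0 : ℝ) < (c : ℝ) := by exact_mod_cast hc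
  rw [Complex.le_def] at h ⊢
  have hre : ((c : ℂ) * x).re = (c : ℝ) * x.re := by
    rw [← Complex.ofReal_natCast, Complex.re_ofReal_mul]
  have hre' : ((c : ℂ) * y).re = (c : ℝ) * y.re := by
    rw [← Complex.ofReal_natCast, Complex.re_ofReal_mul]
  have him : ((c : ℂ) * x).im = (c : ℝ) * x.im := by
    rw [← Complex.ofReal_natCast, Complex.im_ofReal_mul]
  have him' : ((c : ℂ) * y).im = (c : ℝ) * y.im := by
    rw [← Complex.ofReal_natCast, Complex.im_ofReal_mul]
  rw [hre, hre', him, him'] at h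
  exact ⟨le_of_mul_le_mul_left h.1 hcR, mul_left_cancel₀ hcR.ne' h.2⟩

lemma det_le_permanent_of_posDef' {n : ℕ} {A : Matrix (Fin n) (Fin n) ℂ} (hA : A.PosDef) :
    A.det ≤ permanent A := by
  haveI : WellFoundedLT (Fin n) := inferInstance
  haveI : LocallyFiniteOrderBot (Fin n) := inferInstance
  obtain ⟨B, hBtri, hBA⟩ := cholesky_psd (m := Fin n) hA
  have hkey : ((Nat.factorial n : ℕ) : ℂ) * permanent A
      = ∑ f : Fin n → Fin n, pS B f * star (pS B f) := by
    rw [← hBA]; exact step2 B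
  have hdetB : B.det = ∏ i, B i i :=
    Matrix.det_of_upperTriangular (fun i j hij => hBtri i j hij)
  have hperB : permanent B = ∏ i, B i i := permanent_triangular B hBtri
  have hdetA : A.det = permanent B * star (permanent B) := by
    rw [← hBA, Matrix.det_mul, Matrix.det_conjTranspose, hdetB, hperB, mul_comm]
  have himg : ∑ f ∈ Finset.univ.image (fun ρ : Equiv.Perm (Fin n) => ⇑ρ),
      pS B f * star (pS B f)
      = ((Nat.factorial n : ℕ) : ℂ) * (permanent B * star (permanent B)) := by
    rw [Finset.sum_image (fun ρ _ τ _ h => Equiv.coe_fn_injective h)]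
    rw [Finset.sum_congr rfl (fun ρ _ => by rw [pS_perm])]
    rw [Finset.sum_const, Finset.card_univ, nsmul_eq_mul, Fintype.card_perm, Fintype.card_fin]
  have hle : ∑ f ∈ Finset.univ.image (fun ρ : Equiv.Perm (Fin n) => ⇑ρ),
      pS B f * star (pS B f)
      ≤ ∑ f : Fin n → Fin n, pS B f * star (pS B f) :=
    Finset.sum_le_sum_of_subset_of_nonneg (Finset.subset_univ _)
      (fun f _ _ => mul_star_self_nonneg _)
  rw [himg, ← hkey] at hle
  rw [hdetA]
  exact nat_mul_cancel_le (Nat.factorial_pos n) hle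

/-- For any positive semidefinite Hermitian matrix `A`, `per A ≥ det A`. -/
theorem det_le_permanent_of_posSemidef (n : ℕ) (A : Matrix (Fin n) (Fin n) ℂ)
    (hA : A.PosSemidef) :
    A.det ≤ permanent A := by
  set F : ℝ → ℂ := fun ε => permanent (A + (ε : ℂ) • 1) - (A + (ε : ℂ) • 1).det with hF
  have hpos : ∀ ε : ℝ, 0 < ε → 0 ≤ F ε := by
    intro ε hε
    have hone : ((ε : ℂ) • (1 : Matrix (Fin n) (Fin n) ℂ)).PosDef := by
      have : (ε : ℂ) • (1 : Matrix (Fin n) (Fin n) ℂ)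
          = Matrix.diagonal (fun _ => (ε : ℂ)) := by
        funext i j
        by_cases h : i = j <;>
          simp [Matrix.smul_apply, Matrix.one_apply, Matrix.diagonal_apply, h]
      rw [this]
      refine Matrix.PosDef.diagonal (fun _ => ?_)
      rw [Complex.lt_def]
      constructor
      · simpa using hε
      · simp
    have hPD : (A + (ε : ℂ) • 1).PosDef := Matrix.PosDef.posSemidef_add hA hone
    exact sub_nonneg.mpr (det_le_permanent_of_posDef' hPD)
  have hcont : Continuous F := by
    apply Continuous.sub
    · apply continuous_finset_sum
      intro σ _
      apply continuous_finset_prod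
      intro i _
      simp only [Matrix.add_apply, Matrix.smul_apply, smul_eq_mul, Matrix.one_apply]
      exact continuous_const.add (Complex.continuous_ofReal.mul continuous_const)
    · have : (fun ε : ℝ => (A + (ε : ℂ) • 1).det)
          = fun ε : ℝ => ∑ σ : Equiv.Perm (Fin n),
              Equiv.Perm.sign σ • ∏ i, (A + (ε : ℂ) • 1) (σ i) i := by
        funext ε
        rw [Matrix.det_apply]
      rw [this]
      apply continuous_finset_sum
      intro σ _
      apply Continuous.const_smul
      apply continuous_finset_prod
      intro i _
      simp only [Matrix.add_apply, Matrix.smul_apply, smul_eq_mul, Matrix.one_apply]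
      exact continuous_const.add (Complex.continuous_ofReal.mul continuous_const)
  have htend : Filter.Tendsto F (nhdsWithin 0 (Set.Ioi (0 : ℝ))) (nhds (F 0)) :=
    (hcont.tendsto 0).mono_left nhdsWithin_le_nhds
  have hev : ∀ᶠ ε in nhdsWithin 0 (Set.Ioi (0 : ℝ)), 0 ≤ F ε := by
    filter_upwards [self_mem_nhdsWithin] with ε hε
    exact hpos ε hε
  have h0 : 0 ≤ F 0 := ge_of_tendsto htend hev
  have hF0 : F 0 = permanent A - A.det := by
    simp only [hF, Complex.ofReal_zero, zero_smul, add_zero]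
  rw [hF0] at h0
  exact sub_nonneg.mp h0
end

section
/- Let A be an n×n matrix that is either positive definite Hermitian or nonsingular totally nonnegative, λ a partition of m, and μ a weak composition of m into n parts with corresponding multiset I. If the Kostka number K_{λμ} (the number of semistandard Young tableaux of shape λ and content μ) is zero, then Imm_{χ^λ}(A_I) = 0. -/
open scoped Classical ComplexOrder Matrix

/-- A real square matrix is totally nonnegative if all of its minors are nonnegative. -/
def TotallyNonneg {n : ℕ} (A : Matrix (Fin n) (Fin n) ℝ) : Prop :=
  ∀ (k : ℕ) (r c : Fin k → Fin n), StrictMono r → StrictMono c →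
    0 ≤ (A.submatrix r c).det

/-- The Young symmetrizer of a Young diagram `γ` with `m = γ.card` boxes, with respect to the
canonical identification of the cells of `γ` with `Fin γ.card`: the product of the sum of the
row-preserving permutations and the signed sum of the column-preserving permutations, in the
group algebra `ℂ[S_m]`. -/
noncomputable def youngSymmetrizer (γ : YoungDiagram) :
    MonoidAlgebra ℂ (Equiv.Perm (Fin γ.card)) :=
  (∑ τ : Equiv.Perm (Fin γ.card),
      if ∀ r, (γ.cells.equivFin.symm (τ r)).1.1 = (γ.cells.equivFin.symm r).1.1 then
        MonoidAlgebra.single τ (1 : ℂ)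
      else 0) *
  (∑ τ : Equiv.Perm (Fin γ.card),
      if ∀ r, (γ.cells.equivFin.symm (τ r)).1.2 = (γ.cells.equivFin.symm r).1.2 then
        MonoidAlgebra.single τ (((Equiv.Perm.sign τ : ℤ) : ℂ))
      else 0)

/-- The irreducible character `χ^λ` of the symmetric group `S_m` indexed by a partition
(Young diagram) `λ = γ` of `m = γ.card`: if `y_λ` is the Young symmetrizer, then
`χ^λ(σ) = (f^λ / m!) · tr(x ↦ σ x y_λ)` on `ℂ[S_m]`, where
`f^λ = dim (ℂ[S_m] y_λ)` is the dimension of the corresponding Specht module. -/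
noncomputable def youngChar (γ : YoungDiagram) (σ : Equiv.Perm (Fin γ.card)) : ℂ :=
  ((Module.finrank ℂ
      (LinearMap.range (LinearMap.mulRight ℂ (youngSymmetrizer γ))) : ℂ) /
    (Nat.factorial γ.card : ℂ)) *
  LinearMap.trace ℂ _
    ((LinearMap.mulLeft ℂ (MonoidAlgebra.single σ (1 : ℂ))) ∘ₗ
      (LinearMap.mulRight ℂ (youngSymmetrizer γ)))

/-- The Kostka number `K_{λμ}`: the number of semistandard Young tableaux of shape `γ` with
entries in `{0, …, n-1}` (i.e. at most `n` values) and content `μ` (the entry `j` occurs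
exactly `μ j` times).  It equals the dimension of the `μ`-weight space of the irreducible
polynomial `GL_n(ℂ)`-representation of highest weight `γ`. -/
noncomputable def kostkaNumber (γ : YoungDiagram) (n : ℕ) (μ : Fin n → ℕ) : ℕ :=
  Nat.card {T : SemistandardYoungTableau γ //
    (∀ c ∈ γ.cells, T c.1 c.2 < n) ∧
    ∀ j : Fin n, (γ.cells.filter fun c => T c.1 c.2 = (j : ℕ)).card = μ j}

/-!
Let `H ≤ S_m` be the stabilizer of `I` and `e_H = ∑_{h ∈ H} h`. Since
`(A_I)_{h i, h' j} = (A_I)_{i j}` for `h, h' ∈ H`, averaging the immanant over `H × H` replaces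
`χ^λ(σ)` by `∑_{h, h' ∈ H} χ^λ(h σ h')`, which up to a constant is the trace of
`x ↦ e_H σ e_H x y_λ` on `ℂ[S_m]`. Write `y_λ = a_λ b_λ` with `b_λ` the signed sum over the column
group. If every `I ∘ w` takes equal values at two distinct cells `r, s` of one column, then
`w (r s) w⁻¹ ∈ H` is absorbed by `e_H` while `(r s)` acts by `-1` on `b_λ`, so `e_H w b_λ = 0` for
all `w` and the trace vanishes. Otherwise some `I ∘ w` is a filling of `λ` with content `μ` and
distinct entries in each column; such a filling can be rearranged into a semistandard tableau of
the same content, whose row `i` restricted to the entries `< k` has as many cells as there are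
columns with more than `i` entries `< k`. This contradicts `K_{λμ} = 0`.
-/

namespace ImmanantKostka

open Finset

section Tableaux

open YoungDiagram

variable {γ : YoungDiagram}

lemma card_filter_cells_eq_sum_rows (p : ℕ × ℕ → Prop) [DecidablePred p] :
    #{c ∈ γ.cells | p c} = ∑ i ∈ range (γ.colLen 0), #{j ∈ range (γ.rowLen i) | p (i, j)} := by
  have hrow (c) (hc : c ∈ {c ∈ γ.cells | p c}) : c.1 ∈ range (γ.colLen 0) := by
    simp only [mem_filter, mem_cells] at hc
    exact mem_range.2 (mem_iff_lt_colLen.1 (γ.up_left_mem le_rfl (Nat.zero_le _) hc.1))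
  rw [card_eq_sum_card_fiberwise hrow]
  refine sum_congr rfl fun i _ => card_nbij' Prod.snd (fun j => (i, j)) ?_ ?_ ?_ ?_ <;>
    rintro ⟨a, b⟩ <;> simp [mem_iff_lt_rowLen] <;> grind

lemma card_filter_cells_eq_sum_cols (p : ℕ × ℕ → Prop) [DecidablePred p] :
    #{c ∈ γ.cells | p c} = ∑ j ∈ range (γ.rowLen 0), #{i ∈ range (γ.colLen j) | p (i, j)} := by
  have hcol (c) (hc : c ∈ {c ∈ γ.cells | p c}) : c.2 ∈ range (γ.rowLen 0) := by
    simp only [mem_filter, mem_cells] at hc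
    exact mem_range.2 (mem_iff_lt_rowLen.1 (γ.up_left_mem (Nat.zero_le _) le_rfl hc.1))
  rw [card_eq_sum_card_fiberwise hcol]
  refine sum_congr rfl fun j _ => card_nbij' Prod.fst (fun i => (i, j)) ?_ ?_ ?_ ?_ <;>
    rintro ⟨a, b⟩ <;> simp [mem_iff_lt_colLen] <;> grind

section Rectification

variable {f : ℕ → ℕ → ℕ} {n : ℕ}

def ColInjective (γ : YoungDiagram) (f : ℕ → ℕ → ℕ) : Prop :=
  ∀ ⦃i₁ i₂ j⦄, (i₁, j) ∈ γ → (i₂, j) ∈ γ → f i₁ j = f i₂ j → i₁ = i₂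

variable (γ f) in
def colCountLT (j k : ℕ) : ℕ := #{i ∈ range (γ.colLen j) | f i j < k}

variable (γ f) in
def rowShape (i k : ℕ) : ℕ := #{j ∈ range (γ.rowLen 0) | i < colCountLT γ f j k}

variable (γ f n) in
def tableauOf (i j : ℕ) : ℕ := Nat.findGreatest (fun k => rowShape γ f i k ≤ j) n

lemma colCountLT_le_colLen (j k : ℕ) : colCountLT γ f j k ≤ γ.colLen j :=
  (card_filter_le _ _).trans (card_range _).le

lemma colCountLT_mono (j : ℕ) : Monotone (colCountLT γ f j) := fun _ _ hk =>
  card_le_card (monotone_filter_right _ fun _ _ hi => hi.trans_le hk)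

lemma colCountLT_succ (j k : ℕ) :
    colCountLT γ f j (k + 1) = colCountLT γ f j k + #{i ∈ range (γ.colLen j) | f i j = k} := by
  rw [colCountLT, colCountLT, ← card_union_of_disjoint (disjoint_filter.2 fun _ _ h => h.ne),
    ← filter_or]
  simp_rw [Nat.lt_succ_iff_lt_or_eq]

lemma card_filter_col_eq_le_one (hf : ColInjective γ f) (j k : ℕ) :
    #{i ∈ range (γ.colLen j) | f i j = k} ≤ 1 :=
  card_le_one.2 fun a ha b hb => by
    simp only [mem_filter, mem_range] at ha hb
    exact hf (mem_iff_lt_colLen.2 ha.1) (mem_iff_lt_colLen.2 hb.1) (ha.2.trans hb.2.symm)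

lemma colCountLT_of_forall_lt (hfn : ∀ i j, (i, j) ∈ γ → f i j < n) (j : ℕ) :
    colCountLT γ f j n = γ.colLen j := by
  rw [colCountLT, filter_true_of_mem fun i hi => hfn i j (mem_iff_lt_colLen.2 (mem_range.1 hi)),
    card_range]

lemma rowShape_mono (i : ℕ) : Monotone (rowShape γ f i) := fun _ _ hk =>
  card_le_card (monotone_filter_right _ fun j _ hj => hj.trans_le (colCountLT_mono j hk))

lemma rowShape_zero (i : ℕ) : rowShape γ f i 0 = 0 := by
  simp [rowShape, colCountLT]

lemma rowShape_le_rowLen (i k : ℕ) : rowShape γ f i k ≤ γ.rowLen i := by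
  refine (card_le_card fun j hj => ?_).trans (card_range _).le
  simp only [mem_filter, mem_range] at hj ⊢
  exact mem_iff_lt_rowLen.1 (mem_iff_lt_colLen.2 (hj.2.trans_le (colCountLT_le_colLen j k)))

lemma rowShape_succ_succ_le (hf : ColInjective γ f) (i k : ℕ) :
    rowShape γ f (i + 1) (k + 1) ≤ rowShape γ f i k :=
  card_le_card (monotone_filter_right _ fun j _ hj => by
    have := colCountLT_succ (γ := γ) (f := f) j k
    have := card_filter_col_eq_le_one hf j k
    omega)

lemma rowShape_of_forall_lt (hfn : ∀ i j, (i, j) ∈ γ → f i j < n) (i : ℕ) :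
    rowShape γ f i n = γ.rowLen i := by
  simp_rw [rowShape, colCountLT_of_forall_lt hfn, ← mem_iff_lt_colLen]
  rw [← card_range (γ.rowLen i)]
  congr 1
  ext j
  simp only [mem_filter, mem_range, ← mem_iff_lt_rowLen]
  exact ⟨And.right, fun h => ⟨γ.up_left_mem (Nat.zero_le i) le_rfl h, h⟩⟩

lemma sum_rowShape (k : ℕ) :
    ∑ i ∈ range (γ.colLen 0), rowShape γ f i k = ∑ j ∈ range (γ.rowLen 0), colCountLT γ f j k := by
  simp only [rowShape, card_filter]
  rw [sum_comm]
  refine sum_congr rfl fun j _ => ?_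
  have := (colCountLT_le_colLen (f := f) j k).trans (γ.colLen_anti 0 j (Nat.zero_le j))
  rw [← card_filter]
  convert card_range (colCountLT γ f j k) using 2
  ext i
  simp only [mem_filter, mem_range]
  omega

variable {i j k : ℕ}

lemma le_tableauOf_iff (hk : k ≤ n) : k ≤ tableauOf γ f n i j ↔ rowShape γ f i k ≤ j := by
  refine ⟨fun h => (rowShape_mono i h).trans ?_, fun h => Nat.le_findGreatest hk h⟩
  exact Nat.findGreatest_spec (P := fun k => rowShape γ f i k ≤ j) (Nat.zero_le n)
    (by rw [rowShape_zero]; exact Nat.zero_le j)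

lemma tableauOf_eq_iff (hk : k < n) :
    tableauOf γ f n i j = k ↔ rowShape γ f i k ≤ j ∧ j < rowShape γ f i (k + 1) := by
  rw [← le_tableauOf_iff hk.le, ← not_le, ← le_tableauOf_iff hk]
  omega

lemma tableauOf_lt (hfn : ∀ i j, (i, j) ∈ γ → f i j < n) (hij : (i, j) ∈ γ) :
    tableauOf γ f n i j < n := by
  refine (Nat.findGreatest_le n).lt_of_ne fun h => ?_
  have := (le_tableauOf_iff le_rfl).1 h.ge
  rw [rowShape_of_forall_lt hfn] at this
  exact (mem_iff_lt_rowLen.1 hij).not_ge this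

lemma tableauOf_mono_right (i : ℕ) : Monotone (tableauOf γ f n i) := fun _ _ hj =>
  Nat.findGreatest_mono_left (fun _ h => h.trans hj) n

lemma tableauOf_lt_tableauOf_succ (hfn : ∀ i j, (i, j) ∈ γ → f i j < n) (hf : ColInjective γ f)
    (hij : (i + 1, j) ∈ γ) : tableauOf γ f n i j < tableauOf γ f n (i + 1) j := by
  set K := tableauOf γ f n (i + 1) j
  have hK : K < n := tableauOf_lt hfn hij
  rw [← not_le, le_tableauOf_iff hK.le, not_le]
  exact ((tableauOf_eq_iff hK).1 rfl).2.trans_le (rowShape_succ_succ_le hf i K)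

lemma tableauOf_lt_tableauOf (hfn : ∀ i j, (i, j) ∈ γ → f i j < n) (hf : ColInjective γ f)
    {i₁ i₂ : ℕ} (hi : i₁ < i₂) (hij : (i₂, j) ∈ γ) :
    tableauOf γ f n i₁ j < tableauOf γ f n i₂ j := by
  induction hi with
  | refl => exact tableauOf_lt_tableauOf_succ hfn hf hij
  | step _ ih =>
    exact (ih (γ.up_left_mem (Nat.le_succ _) le_rfl hij)).trans
      (tableauOf_lt_tableauOf_succ hfn hf hij)

lemma card_filter_tableauOf_eq (hk : k < n) :
    #{c ∈ γ.cells | tableauOf γ f n c.1 c.2 = k} = #{c ∈ γ.cells | f c.1 c.2 = k} := by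
  have hrow (i : ℕ) : #{j ∈ range (γ.rowLen i) | tableauOf γ f n i j = k} =
      rowShape γ f i (k + 1) - rowShape γ f i k := by
    rw [← Nat.card_Ico]
    congr 1
    ext j
    have := rowShape_le_rowLen (γ := γ) (f := f) i (k + 1)
    simp only [mem_filter, mem_range, mem_Ico, tableauOf_eq_iff hk]
    omega
  rw [card_filter_cells_eq_sum_rows, card_filter_cells_eq_sum_cols]
  simp only [hrow]
  rw [sum_tsub_distrib _ fun i _ => rowShape_mono i k.le_succ, sum_rowShape, sum_rowShape]
  simp only [colCountLT_succ, sum_add_distrib]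
  omega

lemma exists_ssyt_of_colInjective (hfn : ∀ i j, (i, j) ∈ γ → f i j < n)
    (hf : ColInjective γ f) :
    ∃ T : SemistandardYoungTableau γ, (∀ c ∈ γ.cells, T c.1 c.2 < n) ∧
      ∀ k < n, #{c ∈ γ.cells | T c.1 c.2 = k} = #{c ∈ γ.cells | f c.1 c.2 = k} := by
  let T : SemistandardYoungTableau γ :=
    { entry i j := if (i, j) ∈ γ then tableauOf γ f n i j else 0
      row_weak' {i _ _} hj h := by
        rw [if_pos (γ.up_left_mem le_rfl hj.le h), if_pos h]
        exact tableauOf_mono_right i hj.le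
      col_strict' hi h := by
        rw [if_pos (γ.up_left_mem hi.le le_rfl h), if_pos h]
        exact tableauOf_lt_tableauOf hfn hf hi h
      zeros' h := if_neg h }
  have hT (c) (hc : c ∈ γ.cells) : T c.1 c.2 = tableauOf γ f n c.1 c.2 := if_pos hc
  refine ⟨T, fun c hc => hT c hc ▸ tableauOf_lt hfn hc, fun k hk => ?_⟩
  rw [filter_congr fun c hc => by rw [hT c hc], card_filter_tableauOf_eq hk]

end Rectification

lemma kostkaNumber_ne_zero {n : ℕ} {μ : Fin n → ℕ}
    (T : SemistandardYoungTableau γ) (hTn : ∀ c ∈ γ.cells, T c.1 c.2 < n)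
    (hTμ : ∀ k : Fin n, #{c ∈ γ.cells | T c.1 c.2 = k} = μ k) :
    kostkaNumber γ n μ ≠ 0 := by
  refine Nat.card_ne_zero.2 ⟨⟨T, hTn, hTμ⟩, ?_⟩
  refine Finite.of_injective (β := γ.cells → Fin n) (fun T c => ⟨T.1 c.1.1 c.1.2, T.2.1 c c.2⟩)
    fun T₁ T₂ h => Subtype.ext (SemistandardYoungTableau.ext fun i j => ?_)
  by_cases hij : (i, j) ∈ γ
  · exact congrArg Fin.val (congrFun h ⟨(i, j), hij⟩)
  · rw [T₁.1.zeros hij, T₂.1.zeros hij]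

end Tableaux

open Equiv MonoidAlgebra

noncomputable def cellRow (γ : YoungDiagram) (r : Fin γ.card) : ℕ :=
  (γ.cells.equivFin.symm r).1.1

noncomputable def cellCol (γ : YoungDiagram) (r : Fin γ.card) : ℕ :=
  (γ.cells.equivFin.symm r).1.2

lemma exists_ne_cellCol_eq_of_kostkaNumber_eq_zero {γ : YoungDiagram} {n : ℕ} {μ : Fin n → ℕ}
    {I : Fin γ.card → Fin n} (hIμ : ∀ k : Fin n, #{r | I r = k} = μ k)
    (hK : kostkaNumber γ n μ = 0) (w : Perm (Fin γ.card)) :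
    ∃ r s, r ≠ s ∧ cellCol γ r = cellCol γ s ∧ I (w r) = I (w s) := by
  by_contra! h
  set e := γ.cells.equivFin
  set f : ℕ → ℕ → ℕ := fun i j => if hij : (i, j) ∈ γ.cells then I (w (e ⟨(i, j), hij⟩)) else 0
  have hfn (i j : ℕ) (hij : (i, j) ∈ γ) : f i j < n := by simp [f, dif_pos hij]
  have hf : ColInjective γ f := by
    intro i₁ i₂ j h₁ h₂ hf
    by_contra hne
    refine h (e ⟨(i₁, j), h₁⟩) (e ⟨(i₂, j), h₂⟩) ?_ (by simp [cellCol, e]) ?_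
    · simpa [e] using hne
    · simpa [f, dif_pos h₁, dif_pos h₂, Fin.val_inj] using hf
  have hfμ (k : Fin n) : #{c ∈ γ.cells | f c.1 c.2 = k} = μ k := by
    rw [← hIμ k]
    refine card_bij' (fun c hc => w (e ⟨c, (mem_filter.1 hc).1⟩))
      (fun r _ => (e.symm (w⁻¹ r)).1) ?_ ?_ ?_ ?_
    · intro c hc
      obtain ⟨hc, hfc⟩ := mem_filter.1 hc
      simp only [f, dif_pos hc] at hfc
      simpa using Fin.ext hfc
    · intro r hr
      simp_all [f]
    · simp
    · simp
  obtain ⟨T, hTn, hTf⟩ := exists_ssyt_of_colInjective hfn hf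
  exact kostkaNumber_ne_zero T hTn (fun k => (hTf k k.2).trans (hfμ k)) hK

section GroupAlgebra

variable {k α β κ : Type*}

def fiberStabilizer (f : α → β) : Subgroup (Perm α) where
  carrier := {τ | ∀ r, f (τ r) = f r}
  mul_mem' {a b} ha hb r := (ha (b r)).trans (hb r)
  one_mem' _ := rfl
  inv_mem' {a} ha r := by simpa using (ha (a⁻¹ r)).symm

lemma mem_fiberStabilizer {f : α → β} {τ : Perm α} :
    τ ∈ fiberStabilizer f ↔ ∀ r, f (τ r) = f r := Iff.rfl

lemma swap_mem_fiberStabilizer [DecidableEq α] {f : α → β} {r s : α} (h : f r = f s) :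
    swap r s ∈ fiberStabilizer f := by
  intro x
  rcases eq_or_ne x r with rfl | hr
  · simp [h]
  rcases eq_or_ne x s with rfl | hs
  · simp [h]
  rw [swap_apply_of_ne_of_ne hr hs]

variable [Fintype α] [DecidableEq α] [CommRing k]

variable (k) in
noncomputable def symmetrizer (f : α → β) : MonoidAlgebra k (Perm α) :=
  ∑ τ : fiberStabilizer f, single (τ : Perm α) 1

variable (k) in
noncomputable def antisymmetrizer (f : α → β) : MonoidAlgebra k (Perm α) :=
  ∑ τ : fiberStabilizer f, single (τ : Perm α) ((Perm.sign (τ : Perm α) : ℤ) : k)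

lemma symmetrizer_mul_single {f : α → β} {h : Perm α} (hh : h ∈ fiberStabilizer f) :
    symmetrizer k f * single h 1 = symmetrizer k f := by
  rw [symmetrizer, sum_mul]
  exact Fintype.sum_equiv (Equiv.mulRight ⟨h, hh⟩) _ _ fun τ => by simp [single_mul_single]

lemma single_mul_antisymmetrizer {f : α → β} {t : Perm α} (ht : t ∈ fiberStabilizer f) :
    single t 1 * antisymmetrizer k f = ((Perm.sign t : ℤ) : k) • antisymmetrizer k f := by
  rw [antisymmetrizer, mul_sum, smul_sum]
  refine Fintype.sum_equiv (Equiv.mulLeft ⟨t, ht⟩) _ _ fun τ => ?_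
  simp [single_mul_single, ← mul_assoc, ← Int.cast_mul, ← Units.val_mul]

end GroupAlgebra

section Vanishing

variable {k α β κ : Type*} [Fintype α] [DecidableEq α] [Field k] [NeZero (2 : k)]

lemma symmetrizer_mul_single_mul_antisymmetrizer_eq_zero
    {I : α → β} {col : α → κ} {w : Perm α} {r s : α} (hrs : r ≠ s) (hcol : col r = col s)
    (hI : I (w r) = I (w s)) :
    symmetrizer k I * single w 1 * antisymmetrizer k col = 0 := by
  have hconj :
      single (swap (w r) (w s)) (1 : k) * single w 1 = single w 1 * single (swap r s) 1 := by
    rw [single_mul_single, single_mul_single, swap_apply_apply, inv_mul_cancel_right]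
  set x := symmetrizer k I * single w 1 * antisymmetrizer k col
  have h : x = -x := by
    calc x = symmetrizer k I * single (swap (w r) (w s)) 1 * single w 1 *
          antisymmetrizer k col := by
          rw [symmetrizer_mul_single (swap_mem_fiberStabilizer hI)]
      _ = symmetrizer k I * single w 1 * (single (swap r s) 1 * antisymmetrizer k col) := by
          rw [mul_assoc (symmetrizer k I), hconj]; simp only [mul_assoc]
      _ = -x := by
          rw [single_mul_antisymmetrizer (swap_mem_fiberStabilizer hcol), Perm.sign_swap hrs]
          simp [x]
  have h2 : (2 : k) • x = 0 := by rw [two_smul]; nth_rw 1 [h]; exact neg_add_cancel x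
  exact (smul_eq_zero.mp h2).resolve_left two_ne_zero

lemma symmetrizer_mul_mul_antisymmetrizer_eq_zero {I : α → β} {col : α → κ}
    (hI : ∀ w : Perm α, ∃ r s, r ≠ s ∧ col r = col s ∧ I (w r) = I (w s))
    (z : MonoidAlgebra k (Perm α)) :
    symmetrizer k I * z * antisymmetrizer k col = 0 := by
  induction z using MonoidAlgebra.induction_on with
  | of w =>
    obtain ⟨r, s, hrs, hcol, hIw⟩ := hI w
    exact symmetrizer_mul_single_mul_antisymmetrizer_eq_zero hrs hcol hIw
  | add x y hx hy => rw [mul_add, add_mul, hx, hy, add_zero]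
  | smul c x hx => rw [mul_smul_comm, smul_mul_assoc, hx, smul_zero]

end Vanishing

lemma youngSymmetrizer_eq (γ : YoungDiagram) :
    youngSymmetrizer γ = symmetrizer ℂ (cellRow γ) * antisymmetrizer ℂ (cellCol γ) := by
  simp only [youngSymmetrizer, symmetrizer, antisymmetrizer, ← sum_filter]
  congr 1
  · exact sum_subtype _ (fun τ => by simp [mem_fiberStabilizer, cellRow]) _
  · exact sum_subtype _ (fun τ => by simp [mem_fiberStabilizer, cellCol]) _

lemma sum_youngChar_mul_mul_eq_zero {γ : YoungDiagram} {β : Type*} {I : Fin γ.card → β}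
    (hI : ∀ w : Perm (Fin γ.card), ∃ r s, r ≠ s ∧ cellCol γ r = cellCol γ s ∧ I (w r) = I (w s))
    (σ : Perm (Fin γ.card)) :
    ∑ p : fiberStabilizer I × fiberStabilizer I, youngChar γ (p.1 * σ * p.2) = 0 := by
  set A := MonoidAlgebra ℂ (Perm (Fin γ.card))
  set Φ : A →ₗ[ℂ] ℂ := LinearMap.trace ℂ A ∘ₗ
    LinearMap.lcomp ℂ A (LinearMap.mulRight ℂ (youngSymmetrizer γ)) ∘ₗ LinearMap.mul ℂ A
  have hsum : ∑ p : fiberStabilizer I × fiberStabilizer I,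
      single ((p.1 : Perm (Fin γ.card)) * σ * (p.2 : Perm (Fin γ.card))) (1 : ℂ) =
        symmetrizer ℂ I * single σ 1 * symmetrizer ℂ I := by
    rw [symmetrizer, sum_mul, sum_mul_sum, Fintype.sum_prod_type]
    simp only [single_mul_single, mul_one]
  have hzero : Φ (symmetrizer ℂ I * single σ 1 * symmetrizer ℂ I) = 0 := by
    change LinearMap.trace ℂ A (LinearMap.mulLeft ℂ _ ∘ₗ LinearMap.mulRight ℂ _) = 0
    convert map_zero (LinearMap.trace ℂ A)
    refine LinearMap.ext fun x => ?_
    have := symmetrizer_mul_mul_antisymmetrizer_eq_zero hI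
      (single σ 1 * symmetrizer ℂ I * x * symmetrizer ℂ (cellRow γ))
    simpa [youngSymmetrizer_eq, mul_assoc] using this
  have hχ (τ : Perm (Fin γ.card)) : youngChar γ τ =
      (Module.finrank ℂ (LinearMap.mulRight ℂ (youngSymmetrizer γ)).range / γ.card.factorial : ℂ)
        * Φ (single τ 1) := rfl
  rw [Fintype.sum_congr _ _ fun p => hχ _, ← mul_sum, ← map_sum, hsum, hzero, mul_zero]

section Immanant

variable {m : ℕ} {ι : Type*}

lemma prod_submatrix_mul_mul {R : Type*} [CommMonoid R] (A : Matrix ι ι R) {I : Fin m → ι}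
    {h₁ h₂ : Perm (Fin m)} (hh₁ : h₁ ∈ fiberStabilizer I) (hh₂ : h₂ ∈ fiberStabilizer I)
    (σ : Perm (Fin m)) :
    ∏ i, A.submatrix I I ((h₁ * σ * h₂) i) i = ∏ i, A.submatrix I I (σ i) i := by
  calc ∏ i, A.submatrix I I ((h₁ * σ * h₂) i) i = ∏ i, A.submatrix I I (σ (h₂ i)) (h₂ i) := by
        simp only [Matrix.submatrix_apply, Perm.mul_apply, hh₁ _, hh₂ _]
    _ = ∏ i, A.submatrix I I (σ i) i := Equiv.prod_comp h₂ fun i => A.submatrix I I (σ i) i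

lemma immanant_submatrix_eq_sum (χ : Perm (Fin m) → ℂ) (A : Matrix ι ι ℂ) {I : Fin m → ι}
    (h₁ h₂ : fiberStabilizer I) :
    immanant χ (A.submatrix I I) = ∑ σ, χ (h₁ * σ * h₂) * ∏ i, A.submatrix I I (σ i) i := by
  refine (Fintype.sum_equiv ((Equiv.mulRight (h₂ : Perm (Fin m))).trans
    (Equiv.mulLeft (h₁ : Perm (Fin m)))) _ _ fun σ => ?_).symm
  simp only [trans_apply, coe_mulRight, coe_mulLeft, ← mul_assoc,
    prod_submatrix_mul_mul A h₁.2 h₂.2]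

lemma immanant_submatrix_eq_zero {χ : Perm (Fin m) → ℂ} (A : Matrix ι ι ℂ) {I : Fin m → ι}
    (hχ : ∀ σ, ∑ p : fiberStabilizer I × fiberStabilizer I, χ (p.1 * σ * p.2) = 0) :
    immanant χ (A.submatrix I I) = 0 := by
  have hcard : (Fintype.card (fiberStabilizer I × fiberStabilizer I) : ℂ) ≠ 0 :=
    Nat.cast_ne_zero.mpr Fintype.card_ne_zero
  refine (mul_eq_zero.mp ?_).resolve_left hcard
  calc _ = ∑ p : fiberStabilizer I × fiberStabilizer I, immanant χ (A.submatrix I I) := by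
        rw [sum_const, card_univ, nsmul_eq_mul]
    _ = ∑ p : fiberStabilizer I × fiberStabilizer I, ∑ σ,
          χ (p.1 * σ * p.2) * ∏ i, A.submatrix I I (σ i) i :=
        Fintype.sum_congr _ _ fun p => immanant_submatrix_eq_sum χ A p.1 p.2
    _ = ∑ σ, (∑ p : fiberStabilizer I × fiberStabilizer I, χ (p.1 * σ * p.2)) *
          ∏ i, A.submatrix I I (σ i) i := by
        rw [sum_comm]; simp only [sum_mul]
    _ = 0 := by simp [hχ]

end Immanant

end ImmanantKostka

theorem immanant_eq_zero_of_kostka_eq_zero_general (n : ℕ) (γ : YoungDiagram)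
    (μ : Fin n → ℕ)
    (I : Fin γ.card → Fin n)
    (hIμ : ∀ j : Fin n, (Finset.univ.filter fun r => I r = j).card = μ j)
    (A : Matrix (Fin n) (Fin n) ℂ)
    (hK : kostkaNumber γ n μ = 0) :
    immanant (youngChar γ) (A.submatrix I I) = 0 :=
  ImmanantKostka.immanant_submatrix_eq_zero A <|
    ImmanantKostka.sum_youngChar_mul_mul_eq_zero <|
      ImmanantKostka.exists_ne_cellCol_eq_of_kostkaNumber_eq_zero hIμ hK

/-- If `A` is either positive definite Hermitian or nonsingular totally nonnegative, `λ = γ`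
a partition of `m`, and `μ` a weak composition of `m` into `n` parts with corresponding
sorted multiset `I`, and the Kostka number `K_{λμ}` vanishes, then `Imm_{χ^λ}(A_I) = 0`. -/
theorem immanant_eq_zero_of_kostka_eq_zero (n : ℕ) (γ : YoungDiagram)
    (μ : Fin n → ℕ) (hμ : ∑ j, μ j = γ.card)
    (I : Fin γ.card → Fin n) (hI : Monotone I)
    (hIμ : ∀ j : Fin n, (Finset.univ.filter fun r => I r = j).card = μ j)
    (A : Matrix (Fin n) (Fin n) ℂ)
    (hA : A.PosDef ∨
      ∃ B : Matrix (Fin n) (Fin n) ℝ, TotallyNonneg B ∧ B.det ≠ 0 ∧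
        A = B.map Complex.ofReal)
    (hK : kostkaNumber γ n μ = 0) :
    immanant (youngChar γ) (A.submatrix I I) = 0 :=
  immanant_eq_zero_of_kostka_eq_zero_general n γ μ I hIμ A hK
end
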